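/- arXiv:0906.4907 — 2 statements merged into one kernel-verified Lean document; each statement's English description precedes it below -/
import Mathlib

section
/- Let F be a finite subset of ℤ² with nonincreasing row sums (r_i) and column sums (c_j), and let F₁ = {(i,j) : 1 ≤ j ≤ r_i} be its uniquely determined neighbour with column sums v_j = #{l : r_l ≥ j}. If the columns where v_j > c_j, each listed with multiplicity v_j − c_j, have indices j₁ ≤ … ≤ j_α, and the columns where c_i > v_i, each listed with multiplicity c_i − v_i, have indices i₁ ≤ … ≤ i_α, then both lists have the same length α = (1/2)Σ_j |c_j − v_j|, and i_t > j_t for all 1 ≤ t ≤ α. -/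
open Finset

/-- Number of elements of `F` in row `i`. -/
def rowSum (F : Finset (ℤ × ℤ)) (i : ℤ) : ℕ := (F.filter fun p => p.1 = i).card

/-- Number of elements of `F` in column `j`. -/
def colSum (F : Finset (ℤ × ℤ)) (j : ℤ) : ℕ := (F.filter fun p => p.2 = j).card

/-- `F` has row sums `r` on rows `1..m`, column sums `c` on columns `1..n`,
and zero line sums elsewhere. -/
def hasLineSums (F : Finset (ℤ × ℤ)) (m n : ℕ) (r : Fin m → ℕ) (c : Fin n → ℕ) : Prop :=
  (∀ i : Fin m, rowSum F ((i : ℤ) + 1) = r i) ∧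
  (∀ i : ℤ, (∀ k : Fin m, (k : ℤ) + 1 ≠ i) → rowSum F i = 0) ∧
  (∀ j : Fin n, colSum F ((j : ℤ) + 1) = c j) ∧
  (∀ j : ℤ, (∀ k : Fin n, (k : ℤ) + 1 ≠ j) → colSum F j = 0)

/-- The conjugate partition: `conj m r j = #{l : r l ≥ j}`. -/
def conj (m : ℕ) (r : Fin m → ℕ) (j : ℕ) : ℕ := (Finset.univ.filter fun l => j ≤ r l).card

/-! Write `v j = conj m r (j + 1)`. Counting the cells of `F` in the first `k` columns row by row
gives at most `∑ i, min (r i) k = ∑_{j < k} v j`: this is the Gale–Ryser domination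
`∑_{j < k} c j ≤ ∑_{j < k} v j`, with equality for `k = n` since both sides are then `#F`.
As `(v - c)₊ - (c - v)₊ = v - c`, the first `k` columns carry at least as many surplus entries
(values of `J`) as deficit entries (values of `I`), and both lists have the same length `α`.
If `I t ≤ J t`, the columns up to `I t` would carry `t + 1` deficit entries but at most `t`
surplus entries, because no column is both a surplus and a deficit column. -/

theorem Finset.sum_tsub_le_sum_tsub {ι : Type*} {s : Finset ι} {f g : ι → ℕ}
    (h : ∑ i ∈ s, f i ≤ ∑ i ∈ s, g i) : ∑ i ∈ s, (f i - g i) ≤ ∑ i ∈ s, (g i - f i) := by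
  have key : ∑ i ∈ s, (f i - g i) + ∑ i ∈ s, g i = ∑ i ∈ s, (g i - f i) + ∑ i ∈ s, f i := by
    simp only [← sum_add_distrib, tsub_add_eq_max, max_comm]
  omega

theorem lt_of_forall_card_filter_le {β : Type*} [LinearOrder β] {a b : ℕ} {J : Fin a → β}
    {I : Fin b → β} (hJ : Monotone J) (hI : Monotone I) (hJI : ∀ t s, J t ≠ I s)
    (hdom : ∀ y, #{s | I s ≤ y} ≤ #{t | J t ≤ y}) (t : Fin a) (s : Fin b)
    (hts : (t : ℕ) = s) : J t < I s := by
  by_contra! hle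
  have hI_le : (s : ℕ) + 1 ≤ #{s' | I s' ≤ I s} := by
    rw [← Fin.card_Iic]
    exact card_le_card fun s' hs' => mem_filter.2 ⟨mem_univ _, hI (mem_Iic.1 hs')⟩
  have hJ_le : #{t' | J t' ≤ I s} ≤ t := by
    rw [← Fin.card_Iio]
    refine card_le_card fun t' ht' => mem_Iio.2 (lt_of_not_ge fun htt' => ?_)
    exact hJI t' s (le_antisymm (mem_filter.1 ht').2 (hle.trans (hJ htt')))
  have := hdom (I s)
  omega

theorem card_filter_le_eq_sum_Iic {α β : Type*} [Fintype α] [LinearOrder β]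
    [LocallyFiniteOrderBot β] (f : α → β) (y : β) :
    #{x | f x ≤ y} = ∑ j ∈ Iic y, #{x | f x = j} := by
  simp only [sum_card_fiberwise_eq_card_filter, mem_Iic]

theorem sum_min_eq_sum_range_conj {m : ℕ} (r : Fin m → ℕ) (K : ℕ) :
    ∑ i, min (r i) K = ∑ j ∈ range K, conj m r (j + 1) := by
  simp only [conj, card_filter]
  rw [sum_comm]
  refine sum_congr rfl fun i _ => ?_
  rw [← card_filter, ← card_range (min (r i) K)]
  congr 1
  ext j
  simp only [mem_filter, mem_range]
  omega

theorem sum_Iic_conj_eq_sum_min {m n : ℕ} (r : Fin m → ℕ) (k : Fin n) :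
    ∑ j ∈ Iic k, conj m r ((j : ℕ) + 1) = ∑ i, min (r i) (k + 1) := by
  rw [sum_min_eq_sum_range_conj, Nat.range_succ_eq_Iic, ← Fin.map_valEmbedding_Iic, sum_map]
  rfl

theorem sum_conj_eq_sum_min {m n : ℕ} (r : Fin m → ℕ) :
    ∑ j : Fin n, conj m r ((j : ℕ) + 1) = ∑ i, min (r i) n := by
  rw [sum_min_eq_sum_range_conj, Fin.sum_univ_eq_sum_range (fun j => conj m r (j + 1))]

theorem card_eq_sum_card_filter_eq_add_one {α : Type*} {s : Finset α} {k : ℕ} {f : α → ℤ}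
    (h : ∀ p ∈ s, ∃ i : Fin k, f p = i + 1) : #s = ∑ i : Fin k, #{p ∈ s | f p = i + 1} := by
  rw [card_eq_sum_card_fiberwise (f := f) (t := univ.image fun i : Fin k => (i : ℤ) + 1)
    fun p hp => by obtain ⟨i, hi⟩ := h p hp; exact mem_image.2 ⟨i, mem_univ _, hi.symm⟩,
    sum_image fun i _ j _ hij => Fin.ext (by simpa using hij)]

theorem exists_eq_add_one_of_card_filter_eq_zero {α : Type*} {s : Finset α} {k : ℕ}
    {f : α → ℤ} (h : ∀ x : ℤ, (∀ i : Fin k, (i : ℤ) + 1 ≠ x) → #{p ∈ s | f p = x} = 0) {p : α}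
    (hp : p ∈ s) : ∃ i : Fin k, f p = i + 1 := by
  by_contra! hne
  have hpos : 0 < #{q ∈ s | f q = f p} := card_pos.2 ⟨p, mem_filter.2 ⟨hp, rfl⟩⟩
  exact hpos.ne' (h (f p) fun i hi => hne i hi.symm)

namespace hasLineSums

variable {F : Finset (ℤ × ℤ)} {m n : ℕ} {r : Fin m → ℕ} {c : Fin n → ℕ}

theorem exists_fst_eq (hF : hasLineSums F m n r c) {p : ℤ × ℤ} (hp : p ∈ F) :
    ∃ i : Fin m, p.1 = i + 1 :=
  exists_eq_add_one_of_card_filter_eq_zero hF.2.1 hp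

theorem exists_snd_eq (hF : hasLineSums F m n r c) {p : ℤ × ℤ} (hp : p ∈ F) :
    ∃ j : Fin n, p.2 = j + 1 :=
  exists_eq_add_one_of_card_filter_eq_zero hF.2.2.2 hp

theorem card_eq_sum_rowSums (hF : hasLineSums F m n r c) : #F = ∑ i, r i := by
  rw [card_eq_sum_card_filter_eq_add_one fun p => hF.exists_fst_eq]
  exact sum_congr rfl fun i _ => hF.1 i

theorem card_eq_sum_colSums (hF : hasLineSums F m n r c) : #F = ∑ j, c j := by
  rw [card_eq_sum_card_filter_eq_add_one fun p => hF.exists_snd_eq]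
  exact sum_congr rfl fun j _ => hF.2.2.1 j

theorem snd_le (hF : hasLineSums F m n r c) {p : ℤ × ℤ} (hp : p ∈ F) : p.2 ≤ n := by
  obtain ⟨j, hj⟩ := hF.exists_snd_eq hp
  omega

theorem card_filter_snd_le_eq_sum_Iic (hF : hasLineSums F m n r c) (k : Fin n) :
    #{p ∈ F | p.2 ≤ (k : ℤ) + 1} = ∑ j ∈ Iic k, c j := by
  rw [card_eq_sum_card_filter_eq_add_one fun p hp => hF.exists_snd_eq (mem_filter.1 hp).1,
    ← filter_ge_eq_Iic, sum_filter]
  refine sum_congr rfl fun j _ => ?_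
  rw [filter_filter, ← hF.2.2.1 j, colSum]
  split_ifs with hjk
  · congr 1
    refine filter_congr fun p _ => ⟨And.right, fun h => ⟨?_, h⟩⟩
    rw [h]
    exact_mod_cast Nat.succ_le_succ hjk
  · rw [card_eq_zero, filter_eq_empty_iff]
    rintro p - ⟨hle, hj⟩
    rw [hj] at hle
    exact hjk (Fin.le_def.2 (by omega))

theorem card_filter_snd_le_le_sum_min (hF : hasLineSums F m n r c) (K : ℕ) :
    #{p ∈ F | p.2 ≤ (K : ℤ)} ≤ ∑ i, min (r i) K := by
  rw [card_eq_sum_card_filter_eq_add_one fun p hp => hF.exists_fst_eq (mem_filter.1 hp).1]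
  refine sum_le_sum fun i _ => le_min ?_ ?_
  · rw [← hF.1 i, rowSum, filter_filter]
    exact card_le_card (monotone_filter_right _ fun p _ hp => hp.2)
  · calc #{p ∈ {p ∈ F | p.2 ≤ (K : ℤ)} | p.1 = (i : ℤ) + 1} ≤ #(Icc (1 : ℤ) K) := by
          refine card_le_card_of_injOn Prod.snd (fun p hp => ?_) fun p hp q hq hpq => ?_
          · simp only [coe_filter, Set.mem_ofPred_eq, mem_filter] at hp
            obtain ⟨j, hj⟩ := hF.exists_snd_eq hp.1.1
            simp only [coe_Icc, Set.mem_Icc]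
            omega
          · simp only [coe_filter, Set.mem_ofPred_eq, mem_filter] at hp hq
            exact Prod.ext (hp.2.trans hq.2.symm) hpq
      _ = K := by simp

theorem sum_Iic_le_sum_Iic_conj (hF : hasLineSums F m n r c) (k : Fin n) :
    ∑ j ∈ Iic k, c j ≤ ∑ j ∈ Iic k, conj m r ((j : ℕ) + 1) := by
  rw [← hF.card_filter_snd_le_eq_sum_Iic, sum_Iic_conj_eq_sum_min]
  have := hF.card_filter_snd_le_le_sum_min ((k : ℕ) + 1)
  push_cast at this
  exact this

theorem sum_eq_sum_conj (hF : hasLineSums F m n r c) :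
    ∑ j, c j = ∑ j : Fin n, conj m r ((j : ℕ) + 1) := by
  rw [sum_conj_eq_sum_min, ← hF.card_eq_sum_colSums]
  refine le_antisymm ?_ (hF.card_eq_sum_rowSums ▸ sum_le_sum fun i _ => min_le_left _ _)
  calc #F = #{p ∈ F | p.2 ≤ (n : ℤ)} := by rw [filter_true_of_mem fun p => hF.snd_le]
    _ ≤ ∑ i, min (r i) n := hF.card_filter_snd_le_le_sum_min n

end hasLineSums

theorem stmt13_general (m n a b α : ℕ) (r : Fin m → ℕ) (c : Fin n → ℕ) (F : Finset (ℤ × ℤ))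
    (hF : hasLineSums F m n r c)
    (hα : 2 * α = ∑ j : Fin n, ((c j : ℤ) - (conj m r ((j : ℕ) + 1) : ℤ)).natAbs)
    (J : Fin a → Fin n) (I : Fin b → Fin n) (hJ : Monotone J) (hI : Monotone I)
    (hJm : ∀ j : Fin n,
      (Finset.univ.filter fun t => J t = j).card = conj m r ((j : ℕ) + 1) - c j)
    (hIm : ∀ j : Fin n,
      (Finset.univ.filter fun t => I t = j).card = c j - conj m r ((j : ℕ) + 1)) :
    a = α ∧ b = α ∧
    ∀ (t : Fin a) (s : Fin b), (t : ℕ) = (s : ℕ) → (J t : ℕ) < (I s : ℕ) := by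
  have ha : a = ∑ j : Fin n, (conj m r ((j : ℕ) + 1) - c j) := by
    simpa [hJm] using card_eq_sum_card_fiberwise fun t (_ : t ∈ univ) => mem_univ (J t)
  have hb : b = ∑ j : Fin n, (c j - conj m r ((j : ℕ) + 1)) := by
    simpa [hIm] using card_eq_sum_card_fiberwise fun s (_ : s ∈ univ) => mem_univ (I s)
  have hab : a = b := ha.trans <| hb ▸ le_antisymm
    (sum_tsub_le_sum_tsub hF.sum_eq_sum_conj.ge) (sum_tsub_le_sum_tsub hF.sum_eq_sum_conj.le)
  have hsum : a + b = 2 * α := by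
    rw [ha, hb, hα, ← sum_add_distrib]
    exact sum_congr rfl fun j _ => by omega
  have hJI : ∀ t s, J t ≠ I s := fun t s hts => by
    have hJpos : 0 < #{t' | J t' = I s} := card_pos.2 ⟨t, by simp [hts]⟩
    have hIpos : 0 < #{s' | I s' = I s} := card_pos.2 ⟨s, by simp⟩
    rw [hJm] at hJpos
    rw [hIm] at hIpos
    omega
  refine ⟨by omega, by omega, fun t s hts => lt_of_forall_card_filter_le hJ hI hJI ?_ t s hts⟩
  intro y
  rw [card_filter_le_eq_sum_Iic, card_filter_le_eq_sum_Iic]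
  simp only [hJm, hIm]
  exact sum_tsub_le_sum_tsub (hF.sum_Iic_le_sum_Iic_conj y)

theorem stmt13 (m n a b α : ℕ) (r : Fin m → ℕ) (c : Fin n → ℕ) (F : Finset (ℤ × ℤ))
    (hr : Antitone r) (hc : Antitone c) (hF : hasLineSums F m n r c)
    (hα : 2 * α = ∑ j : Fin n, ((c j : ℤ) - (conj m r ((j : ℕ) + 1) : ℤ)).natAbs)
    (J : Fin a → Fin n) (I : Fin b → Fin n) (hJ : Monotone J) (hI : Monotone I)
    (hJm : ∀ j : Fin n,
      (Finset.univ.filter fun t => J t = j).card = conj m r ((j : ℕ) + 1) - c j)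
    (hIm : ∀ j : Fin n,
      (Finset.univ.filter fun t => I t = j).card = c j - conj m r ((j : ℕ) + 1)) :
    a = α ∧ b = α ∧
    ∀ (t : Fin a) (s : Fin b), (t : ℕ) = (s : ℕ) → (J t : ℕ) < (I s : ℕ) :=
  stmt13_general m n a b α r c F hF hα J I hJ hI hJm hIm
end

section
/- Let F be a finite subset of ℤ² with nonincreasing row sums (r_i) and column sums (c_j), and let F₁ be its uniquely determined neighbour (the set {(i,j) : 1 ≤ j ≤ r_i}). Then there exists a sequence of sets F₁ = G₀, G₁, …, G_α = G, where α = (1/2)Σ_j |c_j − v_j| with v_j = #{l : r_l ≥ j}, such that each G_{t} is obtained from G_{t−1} by moving a single element within its row (deleting (l, j) and adding (l, i) for some row l and columns j ≠ i), all G_t have row sums (r_i), and G has column sums (c_j). -/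
open Finset

/-!
The Ferrers set `F₁` packs each row into its leftmost columns, so every block of columns
`1..K` contains at least as many points of `F₁` as of `F`. Starting from any set `H` with the row
sums of `F` and this prefix property, let `I` be the first column where `H` has fewer points than
`F`; the prefix inequality at `I` gives an earlier column `J` where `H` has more. As the column
sums of `F` are nonincreasing, column `J` of `H` is strictly longer than column `I`, so some row
`l` contains `(l, J)` but not `(l, I)`. Moving that point keeps the row sums and the prefix
inequalities and lowers `∑ⱼ |cⱼ - colSum H j|` by exactly 2, so `α` moves reach the column sums
of `F`.
-/

def ColsIn (n : ℕ) (S : Finset (ℤ × ℤ)) : Prop := ∀ p ∈ S, p.2 ∈ Icc (1 : ℤ) n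

def colVec (n : ℕ) (S : Finset (ℤ × ℤ)) (j : Fin n) : ℕ := colSum S ((j : ℤ) + 1)

def IsRowMove (A B : Finset (ℤ × ℤ)) : Prop :=
  ∃ l j i : ℤ, j ≠ i ∧ (l, j) ∈ A ∧ (l, i) ∉ A ∧ B = insert (l, i) (A.erase (l, j))

section LineSums

variable {n : ℕ} {S T : Finset (ℤ × ℤ)}

lemma exists_fin_add_one_eq {y : ℤ} (hy : y ∈ Icc (1 : ℤ) n) :
    ∃ k : Fin n, (k : ℤ) + 1 = y := by
  rw [mem_Icc] at hy
  exact ⟨⟨(y - 1).toNat, by omega⟩, by simp only; omega⟩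

lemma colsIn_of_colSum_eq_zero
    (h : ∀ y : ℤ, (∀ k : Fin n, (k : ℤ) + 1 ≠ y) → colSum S y = 0) : ColsIn n S := by
  intro p hp
  by_contra hp2
  have hpos : colSum S p.2 ≠ 0 := card_ne_zero.mpr ⟨p, mem_filter.mpr ⟨hp, rfl⟩⟩
  refine hpos (h _ fun k hk => hp2 ?_)
  rw [← hk, mem_Icc]
  omega

lemma ColsIn.colSum_eq_zero (hS : ColsIn n S) {y : ℤ} (hy : y ∉ Icc (1 : ℤ) n) :
    colSum S y = 0 := by
  rw [colSum, card_eq_zero, filter_eq_empty_iff]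
  rintro p hp rfl
  exact hy (hS p hp)

lemma colSum_eq_of_colVec_eq (hS : ColsIn n S) (hT : ColsIn n T) (h : colVec n S = colVec n T) :
    colSum S = colSum T := by
  funext y
  by_cases hy : y ∈ Icc (1 : ℤ) n
  · obtain ⟨k, rfl⟩ := exists_fin_add_one_eq hy
    exact congrFun h k
  · rw [hS.colSum_eq_zero hy, hT.colSum_eq_zero hy]

lemma sum_colVec (s : Finset (Fin n)) :
    ∑ j ∈ s, colVec n S j = #{p ∈ S | p.2 ∈ s.image fun j : Fin n => (j : ℤ) + 1} := by
  rw [← sum_card_fiberwise_eq_card_filter,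
    sum_image fun a _ b _ h => Fin.ext (by simpa using h)]
  rfl

lemma ColsIn.card_eq_sum_colVec (hS : ColsIn n S) : #S = ∑ j, colVec n S j := by
  rw [sum_colVec, filter_true_of_mem]
  intro p hp
  obtain ⟨k, hk⟩ := exists_fin_add_one_eq (hS p hp)
  exact mem_image.mpr ⟨k, mem_univ k, hk⟩

lemma ColsIn.sum_Iic_colVec (hS : ColsIn n S) (K : Fin n) :
    ∑ j ∈ Iic K, colVec n S j = #{p ∈ S | p.2 ≤ (K : ℤ) + 1} := by
  rw [sum_colVec]
  congr 1
  refine filter_congr fun p hp => ?_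
  have h1 := (mem_Icc.mp (hS p hp)).1
  simp only [mem_image, mem_Iic]
  constructor
  · rintro ⟨k, hk, hkp⟩
    have : (k : ℕ) ≤ K := hk
    omega
  · intro hpK
    obtain ⟨k, hk⟩ := exists_fin_add_one_eq (hS p hp)
    exact ⟨k, Fin.le_def.mpr (by omega), hk⟩

lemma card_le_card_of_rowSum_le (h : ∀ x, rowSum S x ≤ rowSum T x) : #S ≤ #T := by
  classical
  have hmaps : ∀ U ⊆ S ∪ T, (U : Set (ℤ × ℤ)).MapsTo Prod.fst ((S ∪ T).image Prod.fst) :=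
    fun U hU p hp => mem_image_of_mem _ (hU hp)
  rw [card_eq_sum_card_fiberwise (hmaps S subset_union_left),
    card_eq_sum_card_fiberwise (hmaps T subset_union_right)]
  exact sum_le_sum fun x _ => h x

lemma card_filter_insert_erase (P : ℤ × ℤ → Prop) [DecidablePred P] {a b : ℤ × ℤ}
    (ha : a ∈ S) (hb : b ∉ S) :
    #((insert b (S.erase a)).filter P) + (if P a then 1 else 0)
      = #(S.filter P) + (if P b then 1 else 0) := by
  have hb' : b ∉ (S.filter P).erase a := fun h => hb (mem_filter.mp (mem_of_mem_erase h)).1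
  rw [filter_insert, filter_erase]
  by_cases hPa : P a
  · have hcard := card_erase_add_one (mem_filter.mpr ⟨ha, hPa⟩)
    by_cases hPb : P b <;>
      simp only [hPa, hPb, ↓reduceIte, card_insert_of_notMem hb'] <;> omega
  · rw [erase_eq_of_notMem fun h => hPa (mem_filter.mp h).2] at hb' ⊢
    by_cases hPb : P b <;> simp only [hPa, hPb, ↓reduceIte, card_insert_of_notMem hb']

lemma IsRowMove.rowSum_eq (h : IsRowMove S T) : rowSum T = rowSum S := by
  obtain ⟨l, j, i, -, hj, hi, rfl⟩ := h
  funext x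
  simpa [rowSum] using card_filter_insert_erase (fun p => p.1 = x) hj hi

lemma colSum_insert_erase {l j i : ℤ} (hj : (l, j) ∈ S) (hi : (l, i) ∉ S) (y : ℤ) :
    colSum (insert (l, i) (S.erase (l, j))) y + (if j = y then 1 else 0)
      = colSum S y + (if i = y then 1 else 0) :=
  card_filter_insert_erase (fun p => p.2 = y) hj hi

lemma exists_row_mem_not_mem {i j : ℤ} (h : colSum S i < colSum S j) :
    ∃ l, (l, j) ∈ S ∧ (l, i) ∉ S := by
  by_contra! hS
  refine h.not_ge <|
    card_le_card_of_injOn (fun p => (p.1, i)) (fun p hp => ?_) fun p hp q hq hpq => ?_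
  · obtain ⟨hpS, rfl⟩ := mem_filter.mp hp
    exact mem_filter.mpr ⟨hS p.1 hpS, rfl⟩
  · obtain ⟨-, hp2⟩ := mem_filter.mp hp
    obtain ⟨-, hq2⟩ := mem_filter.mp hq
    exact Prod.ext (Prod.ext_iff.mp hpq).1 (hp2.trans hq2.symm)

end LineSums

def Dominates {n : ℕ} (a b : Fin n → ℕ) : Prop := ∀ K, ∑ j ∈ Iic K, a j ≤ ∑ j ∈ Iic K, b j

def l1Dist {ι : Type*} [Fintype ι] (a b : ι → ℕ) : ℕ := ∑ j, ((a j : ℤ) - b j).natAbs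

section Transfer

variable {n : ℕ} {a b b' : Fin n → ℕ} {I J : Fin n}

lemma eq_of_l1Dist_eq_zero (h : l1Dist a b = 0) : a = b := by
  funext j
  have := (sum_eq_zero_iff.mp h) j (mem_univ j)
  omega

lemma exists_surplus_lt_first_deficit (hdom : Dominates a b) (hsum : ∑ j, a j = ∑ j, b j)
    (hne : a ≠ b) : ∃ J I, J < I ∧ a J < b J ∧ b I < a I ∧ ∀ t < I, a t ≤ b t := by
  have hdef : ∃ i, b i < a i := by
    by_contra! h
    exact hne <| funext fun i => (sum_eq_sum_iff_of_le fun i _ => h i).mp hsum i (mem_univ i)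
  obtain ⟨i, hi⟩ := hdef
  obtain ⟨I, hImin⟩ := (univ.filter fun i => b i < a i).exists_minimal
    ⟨i, mem_filter.mpr ⟨mem_univ i, hi⟩⟩
  have hI : b I < a I := (mem_filter.mp hImin.prop).2
  have hbefore : ∀ t < I, a t ≤ b t := fun t ht => by
    by_contra! hlt
    exact hImin.not_lt (mem_filter.mpr ⟨mem_univ t, hlt⟩) ht
  have hprefix : ∑ j ∈ Iio I, a j < ∑ j ∈ Iio I, b j := by
    have := hdom I
    rw [← Iio_insert, sum_insert notMem_Iio_self, sum_insert notMem_Iio_self] at this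
    omega
  obtain ⟨J, hJ, hJlt⟩ := exists_lt_of_sum_lt hprefix
  exact ⟨J, I, mem_Iio.mp hJ, hJlt, hI, hbefore⟩

lemma sum_add_single_eq (hb' : b' + Pi.single J 1 = b + Pi.single I 1) (s : Finset (Fin n)) :
    ∑ j ∈ s, b' j + (if J ∈ s then 1 else 0) = ∑ j ∈ s, b j + (if I ∈ s then 1 else 0) := by
  simpa only [Pi.add_apply, sum_add_distrib, sum_pi_single'] using
    congrArg (fun f => ∑ j ∈ s, f j) hb'

lemma Dominates.transfer (hdom : Dominates a b) (hJI : J < I) (hJ : a J < b J)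
    (hbefore : ∀ t < I, a t ≤ b t) (hb' : b' + Pi.single J 1 = b + Pi.single I 1) :
    Dominates a b' := by
  intro K
  have hK := sum_add_single_eq hb' (Iic K)
  have hdomK := hdom K
  simp only [mem_Iic] at hK
  by_cases hIK : I ≤ K
  · simp only [hIK, hJI.le.trans hIK, ↓reduceIte] at hK
    omega
  by_cases hJK : J ≤ K
  · have hstrict : ∑ j ∈ Iic K, a j < ∑ j ∈ Iic K, b j :=
      sum_lt_sum (fun t ht => hbefore t ((mem_Iic.mp ht).trans_lt (not_le.mp hIK)))
        ⟨J, mem_Iic.mpr hJK, hJ⟩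
    simp only [hIK, hJK, ↓reduceIte] at hK
    omega
  · simp only [hIK, hJK, ↓reduceIte] at hK
    omega

lemma l1Dist_transfer (hJ : a J < b J) (hI : b I < a I)
    (hb' : b' + Pi.single J 1 = b + Pi.single I 1) : l1Dist a b = l1Dist a b' + 2 := by
  have hpoint : ∀ t, ((a t : ℤ) - b t).natAbs
      = ((a t : ℤ) - b' t).natAbs + (Pi.single J 1 : Fin n → ℕ) t
        + (Pi.single I 1 : Fin n → ℕ) t := by
    intro t
    have ht := congrFun hb' t
    simp only [Pi.add_apply, Pi.single_apply] at ht ⊢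
    split_ifs at ht ⊢ <;> subst_vars <;> omega
  rw [l1Dist, l1Dist, sum_congr rfl fun t _ => hpoint t, sum_add_distrib, sum_add_distrib,
    Fintype.sum_pi_single', Fintype.sum_pi_single']

end Transfer

section Chain

variable {n : ℕ} {a : Fin n → ℕ}

lemma colVec_insert_erase {H : Finset (ℤ × ℤ)} {l : ℤ} {I J : Fin n}
    (hJ : (l, (J : ℤ) + 1) ∈ H) (hI : (l, (I : ℤ) + 1) ∉ H) :
    colVec n (insert (l, (I : ℤ) + 1) (H.erase (l, (J : ℤ) + 1))) + Pi.single J 1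
      = colVec n H + Pi.single I 1 := by
  funext t
  have := colSum_insert_erase hJ hI ((t : ℤ) + 1)
  simp only [add_left_inj, Nat.cast_inj, Fin.val_inj] at this
  simpa only [colVec, Pi.add_apply, Pi.single_apply, eq_comm (a := t)] using this

lemma exists_isRowMove_of_dominates (ha : Antitone a) {H : Finset (ℤ × ℤ)} (hH : ColsIn n H)
    (hdom : Dominates a (colVec n H)) (hsum : ∑ j, a j = ∑ j, colVec n H j)
    (hne : a ≠ colVec n H) :
    ∃ H', IsRowMove H H' ∧ ColsIn n H' ∧ Dominates a (colVec n H') ∧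
      ∑ j, a j = ∑ j, colVec n H' j ∧ l1Dist a (colVec n H) = l1Dist a (colVec n H') + 2 := by
  obtain ⟨J, I, hJI, hJ, hI, hbefore⟩ := exists_surplus_lt_first_deficit hdom hsum hne
  have hcol : colVec n H I < colVec n H J := hI.trans ((ha hJI.le).trans_lt hJ)
  obtain ⟨l, hlJ, hlI⟩ := exists_row_mem_not_mem hcol
  have hmove := colVec_insert_erase hlJ hlI
  refine ⟨_, ⟨l, _, _, by simpa [Fin.val_inj] using hJI.ne, hlJ, hlI, rfl⟩, ?_,
    hdom.transfer hJI hJ hbefore hmove, ?_, l1Dist_transfer hJ hI hmove⟩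
  · intro p hp
    rcases mem_insert.mp hp with rfl | hp
    · simp only [mem_Icc]
      omega
    · exact hH p (mem_of_mem_erase hp)
  · have := sum_add_single_eq hmove univ
    simp only [mem_univ, ↓reduceIte] at this
    omega

theorem exists_rowMove_chain (ha : Antitone a) (α : ℕ) {H : Finset (ℤ × ℤ)} (hH : ColsIn n H)
    (hdom : Dominates a (colVec n H)) (hsum : ∑ j, a j = ∑ j, colVec n H j)
    (hdist : 2 * α = l1Dist a (colVec n H)) :
    ∃ G : ℕ → Finset (ℤ × ℤ), G 0 = H ∧ (∀ t < α, IsRowMove (G t) (G (t + 1))) ∧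
      ColsIn n (G α) ∧ colVec n (G α) = a := by
  induction α generalizing H with
  | zero =>
    have hzero : l1Dist a (colVec n H) = 0 := by omega
    exact ⟨fun _ => H, rfl, by simp, hH, (eq_of_l1Dist_eq_zero hzero).symm⟩
  | succ α ih =>
    have hne : a ≠ colVec n H := by
      rintro rfl
      simp [l1Dist] at hdist
    obtain ⟨H', hmove, hH', hdom', hsum', hdist'⟩ :=
      exists_isRowMove_of_dominates ha hH hdom hsum hne
    obtain ⟨G, hG0, hG, hGα⟩ := ih hH' hdom' hsum' (by omega)
    refine ⟨fun | 0 => H | t + 1 => G t, rfl, fun t ht => ?_, hGα⟩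
    cases t with
    | zero => simpa [hG0] using hmove
    | succ t => exact hG t (by omega)

end Chain

lemma rowSum_eq_of_isRowMove_chain {G : ℕ → Finset (ℤ × ℤ)} {α : ℕ}
    (hG : ∀ t < α, IsRowMove (G t) (G (t + 1))) {t : ℕ} (ht : t ≤ α) :
    rowSum (G t) = rowSum (G 0) := by
  induction t with
  | zero => rfl
  | succ t ih => rw [(hG t (by omega)).rowSum_eq, ih (by omega)]

noncomputable def ferrers (m n : ℕ) (r : Fin m → ℕ) : Finset (ℤ × ℤ) :=
  (Finset.Icc (1 : ℤ) (m : ℤ) ×ˢ Finset.Icc (1 : ℤ) (n : ℤ)).filter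
    (fun p => ∃ i : Fin m, (i : ℤ) + 1 = p.1 ∧ p.2 ≤ (r i : ℤ))

section Ferrers

variable {m n : ℕ} {r : Fin m → ℕ} {c : Fin n → ℕ} {F S : Finset (ℤ × ℤ)}

lemma colsIn_ferrers : ColsIn n (ferrers m n r) :=
  fun _ hp => (mem_product.mp (mem_filter.mp hp).1).2

lemma colVec_ferrers : colVec n (ferrers m n r) = fun j : Fin n => conj m r ((j : ℕ) + 1) := by
  funext j
  have hcol : (ferrers m n r).filter (fun p => p.2 = (j : ℤ) + 1)
      = (univ.filter fun i : Fin m => (j : ℕ) + 1 ≤ r i).image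
          fun i : Fin m => ((i : ℤ) + 1, (j : ℤ) + 1) := by
    ext ⟨x, y⟩
    simp only [ferrers, mem_filter, mem_product, mem_Icc, mem_image, mem_univ, true_and,
      Prod.mk.injEq]
    constructor
    · rintro ⟨⟨-, i, rfl, hy⟩, rfl⟩
      exact ⟨i, by omega, rfl, rfl⟩
    · rintro ⟨i, hi, rfl, rfl⟩
      exact ⟨⟨⟨⟨by omega, by omega⟩, by omega, by omega⟩, i, rfl, by omega⟩, rfl⟩
  rw [colVec, colSum, hcol, card_image_of_injective _ fun i i' h => by
    simpa [Fin.val_inj] using (Prod.ext_iff.mp h).1]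
  rfl

lemma ColsIn.rowSum_le (hS : ColsIn n S) (x : ℤ) : rowSum S x ≤ n := by
  calc rowSum S x ≤ #({x} ×ˢ Icc (1 : ℤ) n) := card_le_card fun p hp => by
        obtain ⟨hpS, rfl⟩ := mem_filter.mp hp
        exact mem_product.mpr ⟨mem_singleton_self _, hS p hpS⟩
    _ = n := by simp

lemma ColsIn.filter_snd_le (hS : ColsIn n S) (k : ℕ) :
    ColsIn k (S.filter fun p => p.2 ≤ (k : ℤ)) := by
  intro p hp
  obtain ⟨hpS, hpk⟩ := mem_filter.mp hp
  exact mem_Icc.mpr ⟨(mem_Icc.mp (hS p hpS)).1, hpk⟩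

lemma rowSum_filter_le (P : ℤ × ℤ → Prop) [DecidablePred P] (x : ℤ) :
    rowSum (S.filter P) x ≤ rowSum S x :=
  card_le_card (filter_subset_filter _ (filter_subset _ _))

lemma filter_fst_ferrers (hF : hasLineSums F m n r c) (x : ℤ) :
    (ferrers m n r).filter (fun p => p.1 = x) = {x} ×ˢ Icc (1 : ℤ) (rowSum F x) := by
  have hFcols : ColsIn n F := colsIn_of_colSum_eq_zero hF.2.2.2
  ext ⟨y, z⟩
  simp only [ferrers, mem_filter, mem_product, mem_Icc, mem_singleton]
  by_cases hx : ∃ i : Fin m, (i : ℤ) + 1 = x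
  · obtain ⟨i, rfl⟩ := hx
    have hrn : r i ≤ n := hF.1 i ▸ hFcols.rowSum_le _
    rw [hF.1 i]
    constructor
    · rintro ⟨⟨⟨-, hz1, -⟩, i', hi', hz⟩, rfl⟩
      obtain rfl : i' = i := Fin.ext (by omega)
      omega
    · rintro ⟨rfl, hz⟩
      exact ⟨⟨⟨⟨by omega, by omega⟩, by omega, by omega⟩, i, rfl, hz.2⟩, rfl⟩
  · push Not at hx
    rw [hF.2.1 x hx]
    constructor
    · rintro ⟨⟨-, i, hi, -⟩, rfl⟩
      exact absurd hi (hx i)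
    · omega

lemma rowSum_ferrers (hF : hasLineSums F m n r c) : rowSum (ferrers m n r) = rowSum F := by
  funext x
  rw [rowSum, filter_fst_ferrers hF, card_product, card_singleton, Int.card_Icc]
  omega

lemma card_ferrers (hF : hasLineSums F m n r c) : #(ferrers m n r) = #F :=
  (card_le_card_of_rowSum_le fun x => by rw [rowSum_ferrers hF]).antisymm
    (card_le_card_of_rowSum_le fun x => by rw [rowSum_ferrers hF])

lemma rowSum_filter_snd_le_ferrers (hF : hasLineSums F m n r c) (x : ℤ) (k : ℕ) :
    rowSum ((ferrers m n r).filter fun p => p.2 ≤ (k : ℤ)) x = min (rowSum F x) k := by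
  rw [rowSum, filter_comm, filter_fst_ferrers hF]
  have : ({x} ×ˢ Icc (1 : ℤ) (rowSum F x)).filter (fun p => p.2 ≤ (k : ℤ))
      = {x} ×ˢ Icc (1 : ℤ) (min (rowSum F x) k : ℕ) := by
    ext ⟨y, z⟩
    simp only [mem_filter, mem_product, mem_singleton, mem_Icc]
    omega
  rw [this, card_product, card_singleton, Int.card_Icc]
  omega

lemma dominates_colVec_ferrers (hF : hasLineSums F m n r c) :
    Dominates (colVec n F) (colVec n (ferrers m n r)) := by
  have hFcols : ColsIn n F := colsIn_of_colSum_eq_zero hF.2.2.2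
  intro K
  rw [hFcols.sum_Iic_colVec, colsIn_ferrers.sum_Iic_colVec]
  refine card_le_card_of_rowSum_le fun x => ?_
  have hk : (K : ℤ) + 1 = ((K + 1 : ℕ) : ℤ) := by push_cast; rfl
  simp only [hk, rowSum_filter_snd_le_ferrers hF]
  exact le_min (rowSum_filter_le _ x) ((hFcols.filter_snd_le _).rowSum_le x)

end Ferrers

theorem stmt14_general (m n α : ℕ) (r : Fin m → ℕ) (c : Fin n → ℕ) (F : Finset (ℤ × ℤ))
    (hc : Antitone c) (hF : hasLineSums F m n r c)
    (hα : 2 * α = ∑ j : Fin n, ((c j : ℤ) - (conj m r ((j : ℕ) + 1) : ℤ)).natAbs) :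
    ∃ G : ℕ → Finset (ℤ × ℤ),
      G 0 = (Finset.Icc (1 : ℤ) (m : ℤ) ×ˢ Finset.Icc (1 : ℤ) (n : ℤ)).filter
        (fun p => ∃ i : Fin m, (i : ℤ) + 1 = p.1 ∧ p.2 ≤ (r i : ℤ)) ∧
      (∀ t < α, ∃ l j i : ℤ, j ≠ i ∧ (l, j) ∈ G t ∧ (l, i) ∉ G t ∧
        G (t + 1) = insert (l, i) ((G t).erase (l, j))) ∧
      (∀ t ≤ α, ∀ x : ℤ, rowSum (G t) x = rowSum F x) ∧
      (∀ y : ℤ, colSum (G α) y = colSum F y) := by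
  have hFcols : ColsIn n F := colsIn_of_colSum_eq_zero hF.2.2.2
  have hcF : colVec n F = c := funext hF.2.2.1
  obtain ⟨G, hG0, hmove, hGcols, hGα⟩ :=
    exists_rowMove_chain (hcF ▸ hc) α colsIn_ferrers
      (dominates_colVec_ferrers hF)
      (by rw [← hFcols.card_eq_sum_colVec, ← colsIn_ferrers.card_eq_sum_colVec,
        card_ferrers hF])
      (by rw [colVec_ferrers, hcF]; exact hα)
  refine ⟨G, hG0, hmove, fun t ht x => ?_, congrFun (colSum_eq_of_colVec_eq hGcols hFcols hGα)⟩
  rw [rowSum_eq_of_isRowMove_chain hmove ht, hG0, rowSum_ferrers hF]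

theorem stmt14 (m n α : ℕ) (r : Fin m → ℕ) (c : Fin n → ℕ) (F : Finset (ℤ × ℤ))
    (hr : Antitone r) (hc : Antitone c) (hF : hasLineSums F m n r c)
    (hα : 2 * α = ∑ j : Fin n, ((c j : ℤ) - (conj m r ((j : ℕ) + 1) : ℤ)).natAbs) :
    ∃ G : ℕ → Finset (ℤ × ℤ),
      G 0 = (Finset.Icc (1 : ℤ) (m : ℤ) ×ˢ Finset.Icc (1 : ℤ) (n : ℤ)).filter
        (fun p => ∃ i : Fin m, (i : ℤ) + 1 = p.1 ∧ p.2 ≤ (r i : ℤ)) ∧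
      (∀ t < α, ∃ l j i : ℤ, j ≠ i ∧ (l, j) ∈ G t ∧ (l, i) ∉ G t ∧
        G (t + 1) = insert (l, i) ((G t).erase (l, j))) ∧
      (∀ t ≤ α, ∀ x : ℤ, rowSum (G t) x = rowSum F x) ∧
      (∀ y : ℤ, colSum (G α) y = colSum F y) :=
  stmt14_general m n α r c F hc hF hα
end
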